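/- arXiv:2605.04696 — 7 statements merged into one kernel-verified Lean document; each statement's English description precedes it below -/
import Mathlib

section
/- Suppose that for every nonempty finite subset J ⊆ I and every integer k ≥ 1 the abelian group H^k(⋂_{j∈J} U_j) is torsion. Then for every nonempty finite subset J ⊆ I and every integer k ≥ |J|, the abelian group H^k(⋃_{j∈J} U_j) is torsion. -/
theorem biUnion_mem_aux {X : Type} {𝒮 : Set (Set X)}
    (hSu : ∀ A ∈ 𝒮, ∀ B ∈ 𝒮, A ∪ B ∈ 𝒮)
    {I : Type} (U : I → Set X) (hU : ∀ i, U i ∈ 𝒮) :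
    ∀ J : Finset I, J.Nonempty → (⋃ j ∈ J, U j) ∈ 𝒮 := by
  classical
  intro J hJ
  induction hJ using Finset.Nonempty.cons_induction with
  | singleton a => simpa using hU a
  | cons a s ha hs ih =>
    rw [Finset.cons_eq_insert, Finset.set_biUnion_insert]
    exact hSu _ (hU a) _ ih

theorem torsion_aux {X : Type} {𝒮 : Set (Set X)}
    (hSu : ∀ A ∈ 𝒮, ∀ B ∈ 𝒮, A ∪ B ∈ 𝒮)
    (hSi : ∀ A ∈ 𝒮, ∀ B ∈ 𝒮, A ∩ B ∈ 𝒮)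
    (H : ℕ → Set X → Type) [∀ k T, AddCommGroup (H k T)]
    (res : ∀ (k : ℕ) (T U : Set X), U ⊆ T → (H k T →+ H k U))
    (δ : ∀ (k : ℕ) (A B : Set X), H k (A ∩ B) →+ H (k + 1) (A ∪ B))
    (hMV1 : ∀ A ∈ 𝒮, ∀ B ∈ 𝒮, ∀ (k : ℕ) (x : H (k + 1) (A ∪ B)),
      (res (k + 1) (A ∪ B) A Set.subset_union_left x = 0 ∧
        res (k + 1) (A ∪ B) B Set.subset_union_right x = 0) ↔
      ∃ y : H k (A ∩ B), δ k A B y = x) :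
    ∀ n : ℕ, ∀ (I : Type) (U : I → Set X), (∀ i, U i ∈ 𝒮) →
      (∀ J : Finset I, J.Nonempty → ∀ k : ℕ, 1 ≤ k →
        AddMonoid.IsTorsion (H k (⋂ j ∈ J, U j))) →
      ∀ J : Finset I, J.Nonempty → J.card = n → ∀ k : ℕ, n ≤ k →
        AddMonoid.IsTorsion (H k (⋃ j ∈ J, U j)) := by
  intro n
  induction n with
  | zero =>
    intro I U hU htor J hJ hcard
    exact absurd hcard (by simpa [Finset.card_eq_zero] using hJ.ne_empty)
  | succ n IH =>
    classical
    intro I U hU htor J hJ hcard k hk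
    obtain ⟨i, hi⟩ := hJ
    set J' := J.erase i with hJ'def
    by_cases hJ' : J'.Nonempty
    · -- inductive step
      have hins : insert i J' = J := Finset.insert_erase hi
      have hcard' : J'.card = n := by
        have h2 : J'.card = J.card - 1 := Finset.card_erase_of_mem hi
        omega
      have hkpos : ∃ k', k = k' + 1 := ⟨k - 1, by omega⟩
      obtain ⟨k', rfl⟩ := hkpos
      set A := U i with hA
      set B := ⋃ j ∈ J', U j with hB
      have hBmem : B ∈ 𝒮 := biUnion_mem_aux hSu U hU J' hJ'
      have hAB : (⋃ j ∈ J, U j) = A ∪ B := by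
        rw [← hins, Finset.set_biUnion_insert]
      rw [hAB]
      intro x
      rw [isOfFinAddOrder_iff_nsmul_eq_zero]
      -- torsion of restrictions to A and B
      have hA_tor : AddMonoid.IsTorsion (H (k' + 1) A) := by
        have h := htor {i} ⟨i, Finset.mem_singleton_self i⟩ (k' + 1) (by omega)
        rw [Finset.set_biInter_singleton] at h
        rw [hA]
        exact h
      have hB_tor : AddMonoid.IsTorsion (H (k' + 1) B) :=
        IH I U hU htor J' hJ' hcard' (k' + 1) (by omega)
      obtain ⟨m1, hm1pos, hm1⟩ := isOfFinAddOrder_iff_nsmul_eq_zero.mp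
        (hA_tor (res (k' + 1) (A ∪ B) A Set.subset_union_left x))
      obtain ⟨m2, hm2pos, hm2⟩ := isOfFinAddOrder_iff_nsmul_eq_zero.mp
        (hB_tor (res (k' + 1) (A ∪ B) B Set.subset_union_right x))
      have h1 : res (k' + 1) (A ∪ B) A Set.subset_union_left ((m2 * m1) • x) = 0 := by
        rw [map_nsmul, mul_smul, hm1, smul_zero]
      have h2 : res (k' + 1) (A ∪ B) B Set.subset_union_right ((m2 * m1) • x) = 0 := by
        rw [map_nsmul, mul_comm, mul_smul, hm2, smul_zero]
      obtain ⟨y, hy⟩ := (hMV1 A (hU i) B hBmem k' ((m2 * m1) • x)).mp ⟨h1, h2⟩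
      -- torsion of H k' (A ∩ B)
      have hABi : A ∩ B = ⋃ j ∈ J', (U i ∩ U j) := by
        simp [hA, hB, Set.inter_iUnion]
      have htorV : ∀ J'' : Finset I, J''.Nonempty → ∀ m : ℕ, 1 ≤ m →
          AddMonoid.IsTorsion (H m (⋂ j ∈ J'', (U i ∩ U j))) := by
        intro J'' hJ'' m hm
        have hset : (⋂ j ∈ J'', (U i ∩ U j)) = ⋂ j ∈ insert i J'', U j := by
          obtain ⟨j0, hj0⟩ := hJ''
          rw [Finset.set_biInter_insert]
          ext z
          simp only [Set.mem_iInter, Set.mem_inter_iff]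
          constructor
          · intro h
            exact ⟨(h j0 hj0).1, fun j hj => (h j hj).2⟩
          · intro h j hj
            exact ⟨h.1, h.2 j hj⟩
        rw [hset]
        exact htor (insert i J'') ⟨i, Finset.mem_insert_self i J''⟩ m hm
      have hV_tor : AddMonoid.IsTorsion (H k' (A ∩ B)) := by
        rw [hABi]
        exact IH I (fun j => U i ∩ U j) (fun j => hSi _ (hU i) _ (hU j)) htorV
          J' hJ' hcard' k' (by omega)
      obtain ⟨m3, hm3pos, hm3⟩ := isOfFinAddOrder_iff_nsmul_eq_zero.mp (hV_tor y)
      refine ⟨m3 * (m2 * m1), by positivity, ?_⟩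
      rw [mul_smul, ← hy, ← map_nsmul, hm3, map_zero]
    · -- base: J = {i}
      have hJs : J = {i} := by
        rw [Finset.not_nonempty_iff_eq_empty] at hJ'
        have := Finset.erase_eq_empty_iff J i |>.mp hJ'
        rcases this with h | h
        · exact absurd hi (by simp [h])
        · exact h
      rw [hJs]
      have h := htor {i} ⟨i, Finset.mem_singleton_self i⟩ k (by omega)
      rw [Finset.set_biInter_singleton] at h
      rw [Finset.set_biUnion_singleton]
      exact h


/-- **Torsion of intersections propagates to unions via Mayer–Vietoris.**
Given a cohomology theory `H` on a family `𝒮` of subsets of `X` (closed under binary unions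
and intersections), with functorial restrictions and Mayer–Vietoris exact sequences, if all
the groups `H^k(⋂_{j∈J} U_j)` (for `J ⊆ I` finite nonempty, `k ≥ 1`) are torsion, then the
groups `H^k(⋃_{j∈J} U_j)` are torsion for `k ≥ |J|`. -/
theorem torsion_of_unions (X : Type) (𝒮 : Set (Set X))
    (hSu : ∀ A ∈ 𝒮, ∀ B ∈ 𝒮, A ∪ B ∈ 𝒮)
    (hSi : ∀ A ∈ 𝒮, ∀ B ∈ 𝒮, A ∩ B ∈ 𝒮)
    (H : ℕ → Set X → Type) [∀ k T, AddCommGroup (H k T)]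
    (res : ∀ (k : ℕ) (T U : Set X), U ⊆ T → (H k T →+ H k U))
    (hres_id : ∀ (k : ℕ) (T : Set X), res k T T (subset_refl T) = AddMonoidHom.id (H k T))
    (hres_comp : ∀ (k : ℕ) (T U W : Set X) (h1 : U ⊆ T) (h2 : W ⊆ U),
      (res k U W h2).comp (res k T U h1) = res k T W (h2.trans h1))
    (δ : ∀ (k : ℕ) (A B : Set X), H k (A ∩ B) →+ H (k + 1) (A ∪ B))
    (hMV1 : ∀ A ∈ 𝒮, ∀ B ∈ 𝒮, ∀ (k : ℕ) (x : H (k + 1) (A ∪ B)),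
      (res (k + 1) (A ∪ B) A Set.subset_union_left x = 0 ∧
        res (k + 1) (A ∪ B) B Set.subset_union_right x = 0) ↔
      ∃ y : H k (A ∩ B), δ k A B y = x)
    (hMV2 : ∀ A ∈ 𝒮, ∀ B ∈ 𝒮, ∀ (k : ℕ) (u : H k A) (v : H k B),
      res k A (A ∩ B) Set.inter_subset_left u = res k B (A ∩ B) Set.inter_subset_right v ↔
      ∃ x : H k (A ∪ B), res k (A ∪ B) A Set.subset_union_left x = u ∧
        res k (A ∪ B) B Set.subset_union_right x = v)
    (hMV3 : ∀ A ∈ 𝒮, ∀ B ∈ 𝒮, ∀ (k : ℕ) (w : H k (A ∩ B)),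
      δ k A B w = 0 ↔ ∃ (u : H k A) (v : H k B),
        res k A (A ∩ B) Set.inter_subset_left u -
          res k B (A ∩ B) Set.inter_subset_right v = w)
    (I : Type) (U : I → Set X) (hU : ∀ i, U i ∈ 𝒮)
    (htor : ∀ J : Finset I, J.Nonempty → ∀ k : ℕ, 1 ≤ k →
      AddMonoid.IsTorsion (H k (⋂ j ∈ J, U j))) :
    ∀ J : Finset I, J.Nonempty → ∀ k : ℕ, J.card ≤ k →
      AddMonoid.IsTorsion (H k (⋃ j ∈ J, U j)) := by
  intro J hJ k hk
  exact torsion_aux hSu hSi H res δ hMV1 J.card I U hU htor J hJ rfl k hk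
end

section
/- Suppose that for every nonempty finite subset J ⊆ I and every integer k ≥ |J| the abelian group H^k(⋃_{j∈J} U_j) is torsion. Then for every nonempty finite subset J ⊆ I and every integer k ≥ 1, the abelian group H^k(⋂_{j∈J} U_j) is torsion. -/
/-- **Torsion of unions propagates to intersections via Mayer–Vietoris.**
Given a cohomology theory `H` on a family `𝒮` of subsets of `X` (closed under binary unions
and intersections), with functorial restrictions and Mayer–Vietoris exact sequences, if all
the groups `H^k(⋃_{j∈J} U_j)` (for `J ⊆ I` finite nonempty, `k ≥ |J|`) are torsion, then the
groups `H^k(⋂_{j∈J} U_j)` are torsion for `k ≥ 1`. -/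
theorem torsion_of_intersections (X : Type) (𝒮 : Set (Set X))
    (hSu : ∀ A ∈ 𝒮, ∀ B ∈ 𝒮, A ∪ B ∈ 𝒮)
    (hSi : ∀ A ∈ 𝒮, ∀ B ∈ 𝒮, A ∩ B ∈ 𝒮)
    (H : ℕ → Set X → Type) [∀ k T, AddCommGroup (H k T)]
    (res : ∀ (k : ℕ) (T U : Set X), U ⊆ T → (H k T →+ H k U))
    (hres_id : ∀ (k : ℕ) (T : Set X), res k T T (subset_refl T) = AddMonoidHom.id (H k T))
    (hres_comp : ∀ (k : ℕ) (T U W : Set X) (h1 : U ⊆ T) (h2 : W ⊆ U),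
      (res k U W h2).comp (res k T U h1) = res k T W (h2.trans h1))
    (δ : ∀ (k : ℕ) (A B : Set X), H k (A ∩ B) →+ H (k + 1) (A ∪ B))
    (hMV1 : ∀ A ∈ 𝒮, ∀ B ∈ 𝒮, ∀ (k : ℕ) (x : H (k + 1) (A ∪ B)),
      (res (k + 1) (A ∪ B) A Set.subset_union_left x = 0 ∧
        res (k + 1) (A ∪ B) B Set.subset_union_right x = 0) ↔
      ∃ y : H k (A ∩ B), δ k A B y = x)
    (hMV2 : ∀ A ∈ 𝒮, ∀ B ∈ 𝒮, ∀ (k : ℕ) (u : H k A) (v : H k B),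
      res k A (A ∩ B) Set.inter_subset_left u = res k B (A ∩ B) Set.inter_subset_right v ↔
      ∃ x : H k (A ∪ B), res k (A ∪ B) A Set.subset_union_left x = u ∧
        res k (A ∪ B) B Set.subset_union_right x = v)
    (hMV3 : ∀ A ∈ 𝒮, ∀ B ∈ 𝒮, ∀ (k : ℕ) (w : H k (A ∩ B)),
      δ k A B w = 0 ↔ ∃ (u : H k A) (v : H k B),
        res k A (A ∩ B) Set.inter_subset_left u -
          res k B (A ∩ B) Set.inter_subset_right v = w)
    (I : Type) (U : I → Set X) (hU : ∀ i, U i ∈ 𝒮)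
    (htor : ∀ J : Finset I, J.Nonempty → ∀ k : ℕ, J.card ≤ k →
      AddMonoid.IsTorsion (H k (⋃ j ∈ J, U j))) :
    ∀ J : Finset I, J.Nonempty → ∀ k : ℕ, 1 ≤ k →
      AddMonoid.IsTorsion (H k (⋂ j ∈ J, U j)) := by
  classical
  -- membership of finite intersections/unions in 𝒮
  have hiInter : ∀ J : Finset I, J.Nonempty → (⋂ j ∈ J, U j) ∈ 𝒮 := by
    intro J hJ
    induction hJ using Finset.Nonempty.cons_induction with
    | singleton a => simpa using hU a
    | cons a s h hs ih =>
        rw [Finset.cons_eq_insert, Finset.set_biInter_insert]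
        exact hSi _ (hU a) _ ih
  have hiUnion : ∀ J : Finset I, J.Nonempty → (⋃ j ∈ J, U j) ∈ 𝒮 := by
    intro J hJ
    induction hJ using Finset.Nonempty.cons_induction with
    | singleton a => simpa using hU a
    | cons a s h hs ih =>
        rw [Finset.cons_eq_insert, Finset.set_biUnion_insert]
        exact hSu _ (hU a) _ ih
  have key : ∀ (J : Finset I) (hJ : J.Nonempty), ∀ (S : Finset I) (k : ℕ), S.card + 1 ≤ k →
      AddMonoid.IsTorsion (H k ((⋂ j ∈ J, U j) ∪ ⋃ s ∈ S, U s)) := by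
    intro J hJ
    induction hJ using Finset.Nonempty.cons_induction with
    | singleton a =>
        intro S k hk
        have hset : (⋂ j ∈ ({a} : Finset I), U j) ∪ ⋃ s ∈ S, U s
            = ⋃ j ∈ insert a S, U j := by
          rw [Finset.set_biUnion_insert]; simp
        rw [hset]
        exact htor (insert a S) (Finset.insert_nonempty a S) k
          (le_trans (Finset.card_insert_le a S) hk)
    | cons a s h hs ih =>
        intro S k hk
        set T : Set X := ⋃ j ∈ S, U j with hT
        set A : Set X := (⋂ j ∈ s, U j) ∪ T with hAdef
        set B : Set X := U a ∪ T with hBdef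
        have hT𝒮 : S.Nonempty → T ∈ 𝒮 := fun hS => hiUnion S hS
        have hA : A ∈ 𝒮 := by
          rcases S.eq_empty_or_nonempty with rfl | hS
          · simpa [hAdef, hT] using hiInter s hs
          · exact hSu _ (hiInter s hs) _ (hT𝒮 hS)
        have hB : B ∈ 𝒮 := by
          rcases S.eq_empty_or_nonempty with rfl | hS
          · simpa [hBdef, hT] using hU a
          · exact hSu _ (hU a) _ (hT𝒮 hS)
        -- the target set is A ∩ B
        have hint : (⋂ j ∈ Finset.cons a s h, U j) ∪ T = A ∩ B := by
          rw [Finset.cons_eq_insert, Finset.set_biInter_insert]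
          ext x
          simp only [hAdef, hBdef, Set.mem_union, Set.mem_inter_iff]
          tauto
        -- A ∪ B is an instance of the inductive statement for s with S' = insert a S
        have hun : A ∪ B = (⋂ j ∈ s, U j) ∪ ⋃ j ∈ insert a S, U j := by
          rw [Finset.set_biUnion_insert]
          ext x
          simp only [hAdef, hBdef, Set.mem_union]
          tauto
        have hABtor : AddMonoid.IsTorsion (H (k + 1) (A ∪ B)) := by
          have := ih (insert a S) (k + 1)
            (by
              have := Finset.card_insert_le a S
              omega)
          rwa [← hun] at this
        have hAtor : AddMonoid.IsTorsion (H k A) := ih S k hk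
        have hBtor : AddMonoid.IsTorsion (H k B) := by
          have hset : B = ⋃ j ∈ insert a S, U j := by
            rw [Finset.set_biUnion_insert]
          rw [hset]
          exact htor (insert a S) (Finset.insert_nonempty a S) k
            (le_trans (Finset.card_insert_le a S) hk)
        rw [hint]
        -- now the Mayer–Vietoris torsion argument
        intro w
        obtain ⟨n, hn, hnw⟩ :=
          isOfFinAddOrder_iff_nsmul_eq_zero.mp (hABtor (δ k A B w))
        have hδ : δ k A B (n • w) = 0 := by rw [map_nsmul, hnw]
        obtain ⟨u, v, huv⟩ := (hMV3 A hA B hB k (n • w)).mp hδ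
        obtain ⟨m, hm, hmu⟩ := isOfFinAddOrder_iff_nsmul_eq_zero.mp (hAtor u)
        obtain ⟨p, hp, hpv⟩ := isOfFinAddOrder_iff_nsmul_eq_zero.mp (hBtor v)
        refine isOfFinAddOrder_iff_nsmul_eq_zero.mpr ⟨m * p * n, by positivity, ?_⟩
        have h1 : (m * p) • u = 0 := by rw [mul_comm, mul_smul, hmu, smul_zero]
        have h2 : (m * p) • v = 0 := by rw [mul_smul, hpv, smul_zero]
        rw [mul_smul, ← huv, smul_sub, ← map_nsmul, ← map_nsmul, h1, h2,
          map_zero, map_zero, sub_zero]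
  intro J hJ k hk
  have := key J hJ ∅ k (by simpa using hk)
  rwa [show ((⋂ j ∈ J, U j) ∪ ⋃ s ∈ (∅ : Finset I), U s) = ⋂ j ∈ J, U j by simp] at this
end

section
/- Let d ≥ 0 and let S and T be nonempty finite subsets of {0, …, d} × ℤ. Define f : ℝ^{d+1} → ℝ by f(x) = max_{(j,β)∈S} (x_j − β) − min_{(i,γ)∈T} (x_i + γ). Let α ∈ ℤ^{d+1}, let π be a permutation of {0, …, d}, and set s_0 = α and s_i = α + e_{π(0)} + ⋯ + e_{π(i−1)} for 1 ≤ i ≤ d, where (e_0, …, e_d) is the standard basis of ℝ^{d+1}. Then the restriction of f to the convex hull of {s_0, s_1, …, s_d} agrees with an affine function, i.e. there exist a linear form L on ℝ^{d+1} and a constant c such that f(x) = L(x) + c for all x in this convex hull. -/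
/-- **Affineness on a maximal simplex.**
Let `S` and `T` be nonempty finite subsets of `{0,…,d} × ℤ` and let
`f x = max_{(j,β)∈S} (x_j − β) − min_{(i,γ)∈T} (x_i + γ)`.
Let `α ∈ ℤ^{d+1}`, let `π` be a permutation of `{0,…,d}` and set `s_0 = α`,
`s_i = α + e_{π(0)} + ⋯ + e_{π(i−1)}`.  Then `f` agrees with an affine function on the
convex hull of `{s_0, …, s_d}`. -/
theorem affine_on_simplex (d : ℕ) (S T : Finset (Fin (d + 1) × ℤ))
    (hS : S.Nonempty) (hT : T.Nonempty)
    (f : (Fin (d + 1) → ℝ) → ℝ)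
    (hf : ∀ x : Fin (d + 1) → ℝ,
      f x = S.sup' hS (fun p => x p.1 - (p.2 : ℝ)) - T.inf' hT (fun p => x p.1 + (p.2 : ℝ)))
    (α : Fin (d + 1) → ℤ) (π : Equiv.Perm (Fin (d + 1)))
    (s : Fin (d + 1) → (Fin (d + 1) → ℝ))
    (hs : ∀ i : Fin (d + 1), s i = (fun j => (α j : ℝ)) +
      ∑ k ∈ Finset.univ.filter (fun k : Fin (d + 1) => (k : ℕ) < (i : ℕ)),
        Pi.single (π k) (1 : ℝ)) :
    ∃ (L : (Fin (d + 1) → ℝ) →ₗ[ℝ] ℝ) (c : ℝ),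
      ∀ x ∈ convexHull ℝ (Set.range s), f x = L x + c := by
  classical
  -- The convex region cut out by the relevant inequalities.
  set A : Set (Fin (d + 1) → ℝ) :=
    {x | (∀ j, (α j : ℝ) ≤ x j ∧ x j ≤ (α j : ℝ) + 1) ∧
      ∀ j j', ((π.symm j : ℕ) ≤ (π.symm j' : ℕ)) → x j' - (α j' : ℝ) ≤ x j - (α j : ℝ)}
    with hA
  have hconv : Convex ℝ A := by
    intro x hx y hy a b ha hb hab
    have habs : ∀ r : ℝ, a * r + b * r = r := by
      intro r; rw [← add_mul, hab, one_mul]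
    refine ⟨fun j => ?_, fun j j' h => ?_⟩
    · obtain ⟨h1, h2⟩ := hx.1 j
      obtain ⟨h3, h4⟩ := hy.1 j
      have e1 := mul_le_mul_of_nonneg_left h1 ha
      have e2 := mul_le_mul_of_nonneg_left h2 ha
      have e3 := mul_le_mul_of_nonneg_left h3 hb
      have e4 := mul_le_mul_of_nonneg_left h4 hb
      have e5 := habs ((α j : ℝ))
      have e6 := habs ((α j : ℝ) + 1)
      constructor <;> simp only [Pi.add_apply, Pi.smul_apply, smul_eq_mul] <;> nlinarith
    · have hx2 := hx.2 j j' h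
      have hy2 := hy.2 j j' h
      have e1 := mul_le_mul_of_nonneg_left hx2 ha
      have e2 := mul_le_mul_of_nonneg_left hy2 hb
      have e3 := habs ((α j : ℝ))
      have e4 := habs ((α j' : ℝ))
      simp only [Pi.add_apply, Pi.smul_apply, smul_eq_mul]
      nlinarith
  -- Value of the vertices.
  have hsj : ∀ i j, s i j = (α j : ℝ) + (if ((π.symm j : ℕ) < (i : ℕ)) then 1 else 0) := by
    intro i j
    rw [hs]
    simp only [Pi.add_apply, Finset.sum_apply]
    congr 1
    have h1 : ∀ k ∈ Finset.univ.filter (fun k : Fin (d + 1) => (k : ℕ) < (i : ℕ)),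
        (Pi.single (π k) (1 : ℝ) : Fin (d + 1) → ℝ) j = if k = π.symm j then (1 : ℝ) else 0 := by
      intro k _
      by_cases hkj : k = π.symm j
      · subst hkj
        rw [Equiv.apply_symm_apply, Pi.single_eq_same]
        simp
      · have : π k ≠ j := by
          intro hc
          exact hkj (by rw [← hc, Equiv.symm_apply_apply])
        rw [Pi.single_apply]
        simp [hkj, Ne.symm this]
    rw [Finset.sum_congr rfl h1, Finset.sum_ite_eq' _ (π.symm j) (fun _ => (1 : ℝ))]
    simp
  have hvert : ∀ i, s i ∈ A := by
    intro i
    refine ⟨fun j => ?_, fun j j' h => ?_⟩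
    · rw [hsj]
      constructor <;> split_ifs <;> norm_num
    · rw [hsj, hsj]
      have key : (if ((π.symm j' : ℕ) < (i : ℕ)) then (1 : ℝ) else 0) ≤
          (if ((π.symm j : ℕ) < (i : ℕ)) then (1 : ℝ) else 0) := by
        split_ifs with h1 h2 h3
        · norm_num
        · exact absurd (lt_of_le_of_lt h h1) h2
        · norm_num
        · norm_num
      linarith
  have hhull : convexHull ℝ (Set.range s) ⊆ A :=
    convexHull_min (Set.range_subset_iff.2 hvert) hconv
  -- Keys.
  set KS : Fin (d + 1) × ℤ → ℝ := fun p => (α p.1 : ℝ) - (p.2 : ℝ) - ((π.symm p.1 : ℕ) : ℝ) / ((d : ℝ) + 2) with hKS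
  set KT : Fin (d + 1) × ℤ → ℝ := fun p => (α p.1 : ℝ) + (p.2 : ℝ) - ((π.symm p.1 : ℕ) : ℝ) / ((d : ℝ) + 2) with hKT
  have hd2 : (0 : ℝ) < (d : ℝ) + 2 := by positivity
  have hfrac : ∀ j : Fin (d + 1), (0 : ℝ) ≤ ((π.symm j : ℕ) : ℝ) / ((d : ℝ) + 2) ∧
      ((π.symm j : ℕ) : ℝ) / ((d : ℝ) + 2) < 1 := by
    intro j
    constructor
    · positivity
    · rw [div_lt_one hd2]
      have : ((π.symm j : ℕ) : ℝ) ≤ d := by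
        exact_mod_cast Nat.le_of_lt_succ (π.symm j).isLt
      linarith
  -- Key comparison lemma for S.
  have keyS : ∀ x ∈ A, ∀ p q : Fin (d + 1) × ℤ, KS q ≤ KS p →
      x q.1 - (q.2 : ℝ) ≤ x p.1 - (p.2 : ℝ) := by
    intro x hx p q hle
    obtain ⟨hfp0, hfp1⟩ := hfrac p.1
    obtain ⟨hfq0, hfq1⟩ := hfrac q.1
    rcases lt_trichotomy (α q.1 - q.2) (α p.1 - p.2) with h | h | h
    · have h' : (α q.1 : ℝ) - q.2 + 1 ≤ (α p.1 : ℝ) - p.2 := by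
        have : α q.1 - q.2 + 1 ≤ α p.1 - p.2 := h
        exact_mod_cast this
      have h2 := (hx.1 q.1).2
      have h3 := (hx.1 p.1).1
      linarith
    · have h' : (α q.1 : ℝ) - q.2 = (α p.1 : ℝ) - p.2 := by exact_mod_cast h
      have hidx : ((π.symm p.1 : ℕ) : ℝ) / ((d : ℝ) + 2) ≤ ((π.symm q.1 : ℕ) : ℝ) / ((d : ℝ) + 2) := by
        simp only [hKS] at hle
        linarith
      have hidx' : ((π.symm p.1 : Fin (d + 1)) : ℕ) ≤ ((π.symm q.1 : Fin (d + 1)) : ℕ) := by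
        have := (div_le_div_iff_of_pos_right hd2).mp hidx
        exact_mod_cast this
      have := hx.2 p.1 q.1 hidx'
      linarith
    · exfalso
      have h' : (α p.1 : ℝ) - p.2 + 1 ≤ (α q.1 : ℝ) - q.2 := by
        have : α p.1 - p.2 + 1 ≤ α q.1 - q.2 := h
        exact_mod_cast this
      simp only [hKS] at hle
      linarith
  -- Key comparison lemma for T.
  have keyT : ∀ x ∈ A, ∀ p q : Fin (d + 1) × ℤ, KT p ≤ KT q →
      x p.1 + (p.2 : ℝ) ≤ x q.1 + (q.2 : ℝ) := by
    intro x hx p q hle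
    obtain ⟨hfp0, hfp1⟩ := hfrac p.1
    obtain ⟨hfq0, hfq1⟩ := hfrac q.1
    rcases lt_trichotomy (α p.1 + p.2) (α q.1 + q.2) with h | h | h
    · have h' : (α p.1 : ℝ) + p.2 + 1 ≤ (α q.1 : ℝ) + q.2 := by
        have : α p.1 + p.2 + 1 ≤ α q.1 + q.2 := h
        exact_mod_cast this
      have h2 := (hx.1 p.1).2
      have h3 := (hx.1 q.1).1
      linarith
    · have h' : (α p.1 : ℝ) + p.2 = (α q.1 : ℝ) + q.2 := by exact_mod_cast h
      have hidx : ((π.symm q.1 : ℕ) : ℝ) / ((d : ℝ) + 2) ≤ ((π.symm p.1 : ℕ) : ℝ) / ((d : ℝ) + 2) := by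
        simp only [hKT] at hle
        linarith
      have hidx' : ((π.symm q.1 : Fin (d + 1)) : ℕ) ≤ ((π.symm p.1 : Fin (d + 1)) : ℕ) := by
        have := (div_le_div_iff_of_pos_right hd2).mp hidx
        exact_mod_cast this
      have := hx.2 q.1 p.1 hidx'
      linarith
    · exfalso
      have h' : (α q.1 : ℝ) + q.2 + 1 ≤ (α p.1 : ℝ) + p.2 := by
        have : α q.1 + q.2 + 1 ≤ α p.1 + p.2 := h
        exact_mod_cast this
      simp only [hKT] at hle
      linarith
  -- Pick the extremizers.
  obtain ⟨p₀, hp₀S, hp₀⟩ := S.exists_max_image KS hS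
  obtain ⟨q₀, hq₀T, hq₀⟩ := T.exists_min_image KT hT
  refine ⟨(LinearMap.proj p₀.1 : (Fin (d + 1) → ℝ) →ₗ[ℝ] ℝ) -
      (LinearMap.proj q₀.1 : (Fin (d + 1) → ℝ) →ₗ[ℝ] ℝ), -(p₀.2 : ℝ) - q₀.2, fun x hx => ?_⟩
  have hxA := hhull hx
  have hsup : S.sup' hS (fun p => x p.1 - (p.2 : ℝ)) = x p₀.1 - (p₀.2 : ℝ) := by
    apply le_antisymm
    · exact Finset.sup'_le _ _ fun p hp => keyS x hxA p₀ p (hp₀ p hp)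
    · exact Finset.le_sup' (fun p => x p.1 - (p.2 : ℝ)) hp₀S
  have hinf : T.inf' hT (fun p => x p.1 + (p.2 : ℝ)) = x q₀.1 + (q₀.2 : ℝ) := by
    apply le_antisymm
    · exact Finset.inf'_le (fun p => x p.1 + (p.2 : ℝ)) hq₀T
    · exact Finset.le_inf' _ _ fun q hq => keyT x hxA q₀ q (hq₀ q hq)
  rw [hf, hsup, hinf]
  simp only [LinearMap.sub_apply, LinearMap.proj_apply]
  ring
end

section
/- Let p be a prime, H a pro-p group, A a commutative ring in which p is invertible, B a commutative A-algebra, and M a smooth A[H]-module. Let H act on M ⊗_A B through the first factor (h·(m ⊗ b) = (h·m) ⊗ b), so that M ⊗_A B is a smooth B[H]-module. Then the natural map M^H ⊗_A B → (M ⊗_A B)^H, induced by the inclusion M^H ⊆ M, is an isomorphism. -/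
open scoped TensorProduct

/-- The `Λ`-submodule of `H`-invariant elements of a `Λ[H]`-module `M`. -/
def invariantsSubmodule (H : Type) [Monoid H] (A : Type) [CommRing A] (M : Type)
    [AddCommGroup M] [Module A M] [DistribMulAction H M] [SMulCommClass H A M] :
    Submodule A M where
  carrier := {m | ∀ h : H, h • m = m}
  add_mem' := fun {a b} ha hb h => by rw [smul_add, ha h, hb h]
  zero_mem' := fun h => smul_zero h
  smul_mem' := fun c m hm h => by rw [smul_comm, hm h]

/-!
Since `p` is invertible in `A` and every open subgroup of the pro-`p` group `H` has `p`-power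
index, every `m ∈ M` can be averaged over its finite orbit:
`average m = [H : Stab m]⁻¹ • ∑_{g ∈ H ⧸ Stab m} g • m`.
Computing the same average over any smaller open subgroup gives the same result, and this makes
averaging an `A`-linear retraction of `M` onto `M^H`. Hence `M^H ⊗ B → M ⊗ B` has a left inverse.
Averaging on the smooth module `M ⊗ B` is averaging on `M` tensored with the identity of `B`;
as it fixes every `H`-invariant `z`, such a `z` lies in the image of `M^H ⊗ B`.
-/

open MulAction

theorem Subgroup.sum_out_eq_relIndex_smul {α M : Type*} [Group α] [AddCommMonoid M]
    {s t : Subgroup α} (hst : s ≤ t) [Fintype (α ⧸ s)] [Fintype (α ⧸ t)] {f : α → M}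
    (hf : ∀ g, ∀ k ∈ t, f (g * k) = f g) :
    ∑ q : α ⧸ s, f q.out = s.relIndex t • ∑ r : α ⧸ t, f r.out := by
  have hout (q : α ⧸ s) : f (quotientEquivProdOfLE hst q).1.out = f q.out := by
    obtain ⟨k, hk⟩ := QuotientGroup.mk_out_eq_mul t q.out
    rw [← hf q.out k k.2, ← hk]
    conv_lhs => rw [← QuotientGroup.out_eq' q]
    rfl
  have : s.FiniteIndex := finiteIndex_of_finite_quotient
  have := Fintype.ofFinite (t ⧸ s.subgroupOf t)
  calc ∑ q : α ⧸ s, f q.out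
      = ∑ x : (α ⧸ t) × (t ⧸ s.subgroupOf t), f x.1.out :=
        Fintype.sum_equiv (quotientEquivProdOfLE hst) _ _ fun q => (hout q).symm
    _ = s.relIndex t • ∑ r : α ⧸ t, f r.out := by
        rw [Fintype.sum_prod_type, Subgroup.relIndex, Subgroup.index_eq_card, Finset.smul_sum]
        simp only [Finset.sum_const, Finset.card_univ, Nat.card_eq_fintype_card]

theorem out_smul_of_le_stabilizer {H M : Type*} [Group H] [MulAction H M] {U : Subgroup H}
    {m : M} (hU : U ≤ stabilizer H m) (g : H) : (g : H ⧸ U).out • m = g • m := by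
  obtain ⟨k, hk⟩ := QuotientGroup.mk_out_eq_mul U g
  rw [hk, mul_smul, mem_stabilizer_iff.mp (hU k.2)]

section Average

variable {H : Type*} [Group H] {A : Type*} [CommRing A] {M : Type*} [AddCommMonoid M]
  [Module A M] [DistribMulAction H M]

variable (H A) in
/-- By the conventions of `finsum` and `Ring.inverse`, this is `0` unless the orbit of `m` is
finite of size invertible in `A`. -/
noncomputable def average (m : M) : M :=
  Ring.inverse ((stabilizer H m).index : A) • ∑ᶠ q : H ⧸ stabilizer H m, q.out • m

theorem index_smul_average {m : M} (hm : IsUnit ((stabilizer H m).index : A))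
    {U : Subgroup H} [Fintype (H ⧸ U)] (hU : U ≤ stabilizer H m) :
    (U.index : A) • average H A m = ∑ q : H ⧸ U, q.out • m := by
  have : U.FiniteIndex := Subgroup.finiteIndex_of_finite_quotient
  have : (stabilizer H m).FiniteIndex := Subgroup.finiteIndex_of_le hU
  have := Fintype.ofFinite (H ⧸ stabilizer H m)
  rw [average, finsum_eq_sum_of_fintype, smul_smul, ← Subgroup.relIndex_mul_index hU,
    Nat.cast_mul, mul_assoc, Ring.mul_inverse_cancel _ hm, mul_one, Nat.cast_smul_eq_nsmul]
  exact (Subgroup.sum_out_eq_relIndex_smul (f := (· • m)) hU fun g k hk => by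
    rw [mul_smul, mem_stabilizer_iff.mp hk]).symm

theorem smul_average [SMulCommClass H A M] (g : H) (m : M) :
    g • average H A m = average H A m := by
  rw [average, smul_comm, ← DistribMulAction.toAddEquiv_apply, AddEquiv.map_finsum]
  congr 1
  conv_rhs => rw [← finsum_comp_equiv (MulAction.toPerm g)]
  congr 1
  ext q
  induction q using QuotientGroup.induction_on with
  | H x => simp [out_smul_of_le_stabilizer le_rfl, mul_smul]

theorem average_eq_self {m : M} (hm : ∀ g : H, g • m = m) : average H A m = m := by
  have hS : stabilizer H m = ⊤ := eq_top_iff.mpr fun g _ => hm g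
  have := Fintype.ofFinite (H ⧸ (⊤ : Subgroup H))
  have h := index_smul_average (A := A) (by simp [hS]) hS.ge
  rw [Subgroup.index_top, Nat.cast_one, one_smul] at h
  rw [h, Finset.sum_congr rfl fun q _ => hm q.out, Finset.sum_const, Finset.card_univ,
    ← Nat.card_eq_fintype_card, ← Subgroup.index_eq_card, Subgroup.index_top, one_smul]

variable [TopologicalSpace H] [IsTopologicalGroup H] [CompactSpace H]

theorem average_add (hindex : ∀ U : Subgroup H, IsOpen (U : Set H) → IsUnit (U.index : A))
    (hsmooth : ∀ m : M, IsOpen (stabilizer H m : Set H)) (m m' : M) :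
    average H A (m + m') = average H A m + average H A m' := by
  let U := stabilizer H m ⊓ stabilizer H m'
  have hU : IsOpen (U : Set H) := (hsmooth m).inter (hsmooth m')
  have := U.quotient_finite_of_isOpen hU
  have := Fintype.ofFinite (H ⧸ U)
  have hle : U ≤ stabilizer H (m + m') := fun g hg => by
    rw [mem_stabilizer_iff, smul_add, mem_stabilizer_iff.mp hg.1, mem_stabilizer_iff.mp hg.2]
  rw [← (hindex U hU).smul_left_cancel, smul_add, index_smul_average (hindex _ (hsmooth _)) hle,
    index_smul_average (hindex _ (hsmooth _)) inf_le_left,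
    index_smul_average (hindex _ (hsmooth _)) inf_le_right, ← Finset.sum_add_distrib]
  exact Finset.sum_congr rfl fun q _ => smul_add _ _ _

theorem average_smul [SMulCommClass H A M]
    (hindex : ∀ U : Subgroup H, IsOpen (U : Set H) → IsUnit (U.index : A))
    (hsmooth : ∀ m : M, IsOpen (stabilizer H m : Set H)) (a : A) (m : M) :
    average H A (a • m) = a • average H A m := by
  have := (stabilizer H m).quotient_finite_of_isOpen (hsmooth m)
  have := Fintype.ofFinite (H ⧸ stabilizer H m)
  have hle : stabilizer H m ≤ stabilizer H (a • m) := fun g hg => by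
    rw [mem_stabilizer_iff, smul_comm, mem_stabilizer_iff.mp hg]
  rw [← (hindex _ (hsmooth m)).smul_left_cancel, index_smul_average (hindex _ (hsmooth _)) hle,
    smul_comm, index_smul_average (hindex _ (hsmooth _)) le_rfl, Finset.smul_sum]
  exact Finset.sum_congr rfl fun q _ => smul_comm _ _ _

end Average

section Invariants

variable {H : Type} [Group H] {A : Type} [CommRing A] {M : Type} [AddCommGroup M] [Module A M]
  [DistribMulAction H M] [SMulCommClass H A M] (B : Type) [AddCommGroup B] [Module A B]

local instance : SMulCommClass A H M := .symm _ _ _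

theorem map_toLinearMap_eq_smul (g : H) (z : M ⊗[A] B) :
    TensorProduct.map (DistribSMul.toLinearMap A M g) (LinearMap.id : B →ₗ[A] B) z = g • z := by
  induction z using TensorProduct.induction_on with
  | zero => simp
  | tmul m b => rfl
  | add x y hx hy => rw [map_add, hx, hy, smul_add]

variable [TopologicalSpace H] [IsTopologicalGroup H]

theorem isOpen_stabilizer_tensorProduct (hsmooth : ∀ m : M, IsOpen (stabilizer H m : Set H))
    (z : M ⊗[A] B) : IsOpen (stabilizer H z : Set H) := by
  induction z using TensorProduct.induction_on with
  | zero =>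
    rw [show stabilizer H (0 : M ⊗[A] B) = ⊤ from eq_top_iff.mpr fun g _ => smul_zero g,
      Subgroup.coe_top]
    exact isOpen_univ
  | tmul m b =>
    refine Subgroup.isOpen_mono (fun g hg => ?_) (hsmooth m)
    rw [mem_stabilizer_iff, TensorProduct.smul_tmul', mem_stabilizer_iff.mp hg]
  | add x y hx hy =>
    refine Subgroup.isOpen_mono (H₁ := stabilizer H x ⊓ stabilizer H y) (fun g hg => ?_)
      (hx.inter hy)
    rw [mem_stabilizer_iff, smul_add, mem_stabilizer_iff.mp hg.1, mem_stabilizer_iff.mp hg.2]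

variable [CompactSpace H]

noncomputable def averageLinearMap
    (hindex : ∀ U : Subgroup H, IsOpen (U : Set H) → IsUnit (U.index : A))
    (hsmooth : ∀ m : M, IsOpen (stabilizer H m : Set H)) :
    M →ₗ[A] invariantsSubmodule H A M where
  toFun m := ⟨average H A m, fun g => smul_average g m⟩
  map_add' m m' := Subtype.ext (average_add hindex hsmooth m m')
  map_smul' a m := Subtype.ext (average_smul hindex hsmooth a m)

theorem averageLinearMap_comp_subtype
    (hindex : ∀ U : Subgroup H, IsOpen (U : Set H) → IsUnit (U.index : A))
    (hsmooth : ∀ m : M, IsOpen (stabilizer H m : Set H)) :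
    averageLinearMap hindex hsmooth ∘ₗ (invariantsSubmodule H A M).subtype = LinearMap.id :=
  LinearMap.ext fun n => Subtype.ext (average_eq_self n.2)

theorem average_tmul (hindex : ∀ U : Subgroup H, IsOpen (U : Set H) → IsUnit (U.index : A))
    (hsmooth : ∀ m : M, IsOpen (stabilizer H m : Set H)) (m : M) (b : B) :
    average H A (m ⊗ₜ[A] b) = average H A m ⊗ₜ b := by
  have := (stabilizer H m).quotient_finite_of_isOpen (hsmooth m)
  have := Fintype.ofFinite (H ⧸ stabilizer H m)
  have hle : stabilizer H m ≤ stabilizer H (m ⊗ₜ[A] b) := fun g hg => by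
    rw [mem_stabilizer_iff, TensorProduct.smul_tmul', mem_stabilizer_iff.mp hg]
  rw [← (hindex _ (hsmooth m)).smul_left_cancel,
    index_smul_average (hindex _ (isOpen_stabilizer_tensorProduct B hsmooth _)) hle,
    TensorProduct.smul_tmul', index_smul_average (hindex _ (hsmooth m)) le_rfl,
    TensorProduct.sum_tmul]
  exact Finset.sum_congr rfl fun q _ => TensorProduct.smul_tmul' _ _ _

theorem map_subtype_comp_averageLinearMap
    (hindex : ∀ U : Subgroup H, IsOpen (U : Set H) → IsUnit (U.index : A))
    (hsmooth : ∀ m : M, IsOpen (stabilizer H m : Set H)) :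
    TensorProduct.map ((invariantsSubmodule H A M).subtype ∘ₗ averageLinearMap hindex hsmooth)
        (LinearMap.id : B →ₗ[A] B) =
      (invariantsSubmodule H A (M ⊗[A] B)).subtype ∘ₗ
        averageLinearMap hindex (isOpen_stabilizer_tensorProduct B hsmooth) :=
  TensorProduct.ext' fun m b => (average_tmul B hindex hsmooth m b).symm

theorem injective_map_subtype_invariantsSubmodule
    (hindex : ∀ U : Subgroup H, IsOpen (U : Set H) → IsUnit (U.index : A))
    (hsmooth : ∀ m : M, IsOpen (stabilizer H m : Set H)) :
    Function.Injective
      (TensorProduct.map (invariantsSubmodule H A M).subtype (LinearMap.id : B →ₗ[A] B)) :=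
  Function.LeftInverse.injective
    (g := TensorProduct.map (averageLinearMap hindex hsmooth) LinearMap.id) fun x => by
      rw [← LinearMap.comp_apply, ← TensorProduct.map_comp, averageLinearMap_comp_subtype,
        LinearMap.id_comp, TensorProduct.map_id, LinearMap.id_apply]

theorem range_map_subtype_invariantsSubmodule
    (hindex : ∀ U : Subgroup H, IsOpen (U : Set H) → IsUnit (U.index : A))
    (hsmooth : ∀ m : M, IsOpen (stabilizer H m : Set H)) :
    LinearMap.range
        (TensorProduct.map (invariantsSubmodule H A M).subtype (LinearMap.id : B →ₗ[A] B)) =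
      invariantsSubmodule H A (M ⊗[A] B) := by
  refine le_antisymm ?_ fun z hz => ?_
  · rintro _ ⟨w, rfl⟩ g
    have hfix : DistribSMul.toLinearMap A M g ∘ₗ (invariantsSubmodule H A M).subtype =
        (invariantsSubmodule H A M).subtype := LinearMap.ext fun n => n.2 g
    rw [← map_toLinearMap_eq_smul, ← LinearMap.comp_apply, ← TensorProduct.map_comp, hfix,
      LinearMap.id_comp]
  · refine ⟨TensorProduct.map (averageLinearMap hindex hsmooth) (LinearMap.id : B →ₗ[A] B) z, ?_⟩
    rw [← LinearMap.comp_apply, ← TensorProduct.map_comp, LinearMap.id_comp,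
      map_subtype_comp_averageLinearMap]
    exact average_eq_self (A := A) hz

end Invariants

theorem Subgroup.isOpen_normalCore {G : Type*} [Group G] [TopologicalSpace G]
    [IsTopologicalGroup G] [CompactSpace G] {U : Subgroup G} (hU : IsOpen (U : Set G)) :
    IsOpen (U.normalCore : Set G) := by
  have := U.quotient_finite_of_isOpen hU
  have : U.FiniteIndex := finiteIndex_of_finite_quotient
  exact isOpen_of_isClosed_of_finiteIndex _ (U.normalCore_isClosed (U.isClosed_of_isOpen hU))

theorem isUnit_index_of_isOpen {p : ℕ} {G : Type*} [Group G] [TopologicalSpace G]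
    [IsTopologicalGroup G] [CompactSpace G]
    (hG : ∀ N : Subgroup G, N.Normal → IsOpen (N : Set G) → ∃ n : ℕ, Nat.card (G ⧸ N) = p ^ n)
    {A : Type*} [CommRing A] (hA : IsUnit (p : A)) {U : Subgroup G} (hU : IsOpen (U : Set G)) :
    IsUnit (U.index : A) := by
  obtain ⟨n, hn⟩ := hG U.normalCore U.normalCore_normal (Subgroup.isOpen_normalCore hU)
  refine isUnit_of_dvd_unit (Nat.cast_dvd_cast (Subgroup.index_dvd_of_le U.normalCore_le)) ?_
  rw [Subgroup.index, hn, Nat.cast_pow]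
  exact hA.pow n

theorem invariants_tensor_general (p : ℕ)
    (H : Type) [Group H] [TopologicalSpace H] [IsTopologicalGroup H]
    [CompactSpace H]
    (hH : ∀ N : Subgroup H, N.Normal → IsOpen (N : Set H) →
      ∃ n : ℕ, Nat.card (H ⧸ N) = p ^ n)
    (A : Type) [CommRing A] (hA : IsUnit (p : A))
    (B : Type) [CommRing B] [Algebra A B]
    (M : Type) [AddCommGroup M] [Module A M] [DistribMulAction H M] [SMulCommClass H A M]
    (hsm : ∀ x : M, IsOpen ((MulAction.stabilizer H x : Subgroup H) : Set H)) :
    Function.Injective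
      (TensorProduct.map (invariantsSubmodule H A M).subtype (LinearMap.id : B →ₗ[A] B)) ∧
    Set.range
      (TensorProduct.map (invariantsSubmodule H A M).subtype (LinearMap.id : B →ₗ[A] B)) =
    {z : M ⊗[A] B | ∀ h : H,
      TensorProduct.map (DistribMulAction.toLinearMap A M h) (LinearMap.id : B →ₗ[A] B) z = z} := by
  have hindex (U : Subgroup H) (hU : IsOpen (U : Set H)) : IsUnit (U.index : A) :=
    isUnit_index_of_isOpen hH hA hU
  refine ⟨injective_map_subtype_invariantsSubmodule B hindex hsm, ?_⟩
  rw [← LinearMap.coe_range, range_map_subtype_invariantsSubmodule B hindex hsm]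
  ext z
  exact forall_congr' fun g => map_toLinearMap_eq_smul B g z ▸ Iff.rfl

/-- **Invariants commute with base change for smooth modules over a pro-`p` group.**
Let `p` be a prime, `H` a pro-`p` group, `A` a commutative ring in which `p` is invertible,
`B` a commutative `A`-algebra and `M` a smooth `A[H]`-module.  Letting `H` act on `M ⊗_A B`
through the first factor, the natural map `M^H ⊗_A B → (M ⊗_A B)^H` is an isomorphism. -/
theorem invariants_tensor (p : ℕ) (hp : p.Prime)
    (H : Type) [Group H] [TopologicalSpace H] [IsTopologicalGroup H]
    [CompactSpace H] [T2Space H] [TotallyDisconnectedSpace H]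
    (hH : ∀ N : Subgroup H, N.Normal → IsOpen (N : Set H) →
      ∃ n : ℕ, Nat.card (H ⧸ N) = p ^ n)
    (A : Type) [CommRing A] (hA : IsUnit (p : A))
    (B : Type) [CommRing B] [Algebra A B]
    (M : Type) [AddCommGroup M] [Module A M] [DistribMulAction H M] [SMulCommClass H A M]
    (hsm : ∀ x : M, IsOpen ((MulAction.stabilizer H x : Subgroup H) : Set H)) :
    Function.Injective
      (TensorProduct.map (invariantsSubmodule H A M).subtype (LinearMap.id : B →ₗ[A] B)) ∧
    Set.range
      (TensorProduct.map (invariantsSubmodule H A M).subtype (LinearMap.id : B →ₗ[A] B)) =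
    {z : M ⊗[A] B | ∀ h : H,
      TensorProduct.map (DistribMulAction.toLinearMap A M h) (LinearMap.id : B →ₗ[A] B) z = z} :=
  invariants_tensor_general p H hH A hA B M hsm
end

section
/- Let p be a prime and let (N_j)_{j∈ℕ} be an inverse system of finitely generated free ℤ[1/p]-modules, with transition maps N_{j'} → N_j for j' ≥ j. Then the inverse system (N_j ⊗_ℤ (ℚ/ℤ))_{j∈ℕ}, with the induced transition maps, satisfies the Mittag–Leffler condition: for every j there exists j₀ ≥ j such that for all j' ≥ j₀ the image of N_{j'} ⊗_ℤ (ℚ/ℤ) → N_j ⊗_ℤ (ℚ/ℤ) equals the image of N_{j₀} ⊗_ℤ (ℚ/ℤ) → N_j ⊗_ℤ (ℚ/ℤ). -/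
open scoped TensorProduct

/-- `ℚ/ℤ`. -/
abbrev QmodZ : Type := ℚ ⧸ AddSubgroup.zmultiples (1 : ℚ)

lemma exists_smul_mem_of_finrank_le {R P : Type*} [CommRing R] [StrongRankCondition R]
    [AddCommGroup P] [Module R P] {M' M₀ : Submodule R P} (hle : M' ≤ M₀)
    [Module.Finite R M₀] (hr : Module.finrank R M₀ ≤ Module.finrank R M')
    {x : P} (hx : x ∈ M₀) : ∃ a : R, a ≠ 0 ∧ a • x ∈ M' := by
  by_contra hcon
  push_neg at hcon
  set n := Module.finrank R M' with hn
  obtain ⟨f, hf⟩ := exists_linearIndependent_of_le_finrank (le_refl n)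
  have hf' : LinearIndependent R (fun i => ((f i : M') : P)) :=
    hf.map' M'.subtype (Submodule.ker_subtype M')
  set v : Fin (n + 1) → P := Fin.cons x (fun i => ((f i : M') : P)) with hv_def
  have hv : LinearIndependent R v := by
    rw [Fintype.linearIndependent_iff]
    intro g hg
    have hsum : g 0 • x + ∑ i : Fin n, g i.succ • ((f i : M') : P) = 0 := by
      rw [← hg, Fin.sum_univ_succ]
      simp [hv_def]
    have hg0 : g 0 = 0 := by
      by_contra hg0
      refine hcon (g 0) hg0 ?_
      have : g 0 • x = -∑ i : Fin n, g i.succ • ((f i : M') : P) := by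
        linear_combination (norm := module) hsum
      rw [this]
      exact neg_mem (Submodule.sum_mem _ fun i _ => Submodule.smul_mem _ _ (f i).2)
    have hsum' : ∑ i : Fin n, g i.succ • ((f i : M') : P) = 0 := by
      rw [hg0] at hsum; simpa using hsum
    have hzero := Fintype.linearIndependent_iff.mp hf' (fun i => g i.succ) hsum'
    intro i
    refine Fin.cases hg0 (fun i => hzero i) i
  have hvM : ∀ i, v i ∈ M₀ := by
    intro i
    refine Fin.cases ?_ (fun i => ?_) i <;> simp only [hv_def, Fin.cons_zero, Fin.cons_succ]
    · exact hx
    · exact hle (f i).2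
  have hw : LinearIndependent R (fun i => (⟨v i, hvM i⟩ : M₀)) :=
    LinearIndependent.of_comp M₀.subtype (by exact hv)
  have := hw.fintype_card_le_finrank
  simp only [Fintype.card_fin] at this
  omega

/-- **Mittag–Leffler for an inverse system of f.g. free `ℤ[1/p]`-modules tensored with `ℚ/ℤ`.**
Let `p` be a prime and `(N_j)` an inverse system of finitely generated free `ℤ[1/p]`-modules.
Then the inverse system `(N_j ⊗ ℚ/ℤ)` satisfies the Mittag–Leffler condition: for every `j`
there is `j₀ ≥ j` such that for all `j' ≥ j₀` the image of `N_{j'} ⊗ ℚ/ℤ → N_j ⊗ ℚ/ℤ` agrees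
with the image of `N_{j₀} ⊗ ℚ/ℤ → N_j ⊗ ℚ/ℤ`. -/
theorem mittag_leffler_tensor_QmodZ (p : ℕ) (hp : p.Prime)
    (N : ℕ → Type)
    [∀ j, AddCommGroup (N j)] [∀ j, Module (Localization.Away (p : ℤ)) (N j)]
    [∀ j, Module.Free (Localization.Away (p : ℤ)) (N j)]
    [∀ j, Module.Finite (Localization.Away (p : ℤ)) (N j)]
    (t : ∀ j' j : ℕ, j ≤ j' → (N j' →ₗ[Localization.Away (p : ℤ)] N j))
    (ht_id : ∀ j, t j j le_rfl = LinearMap.id)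
    (ht_comp : ∀ (j'' j' j : ℕ) (h1 : j' ≤ j'') (h2 : j ≤ j'),
      (t j' j h2).comp (t j'' j' h1) = t j'' j (h2.trans h1)) :
    ∀ j : ℕ, ∃ j₀ : ℕ, ∃ hj₀ : j ≤ j₀, ∀ (j' : ℕ) (h : j₀ ≤ j'),
      LinearMap.range (TensorProduct.map
          ((t j' j (hj₀.trans h)).toAddMonoidHom.toIntLinearMap)
          (LinearMap.id : QmodZ →ₗ[ℤ] QmodZ)) =
      LinearMap.range (TensorProduct.map
          ((t j₀ j hj₀).toAddMonoidHom.toIntLinearMap)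
          (LinearMap.id : QmodZ →ₗ[ℤ] QmodZ)) := by
  set R := Localization.Away (p : ℤ) with hR
  have hp0 : (p : ℤ) ≠ 0 := by exact_mod_cast hp.ne_zero
  haveI : IsDomain R := IsLocalization.isDomain_localization
    (powers_le_nonZeroDivisors_of_noZeroDivisors hp0)
  intro j
  set d : ℕ → ℕ := fun k =>
    Module.finrank R (LinearMap.range (t (j + k) j (Nat.le_add_right j k))) with hd
  have hne : (Set.range d).Nonempty := ⟨d 0, 0, rfl⟩
  obtain ⟨k₀, hk₀⟩ := Nat.sInf_mem hne
  have hmin : ∀ k, d k₀ ≤ d k := fun k => hk₀ ▸ Nat.sInf_le ⟨k, rfl⟩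
  refine ⟨j + k₀, Nat.le_add_right j k₀, ?_⟩
  intro j' h
  obtain ⟨k, rfl⟩ : ∃ k, j' = j + k := ⟨j' - j, by omega⟩
  have hj₀ : j ≤ j + k₀ := Nat.le_add_right j k₀
  set M' := LinearMap.range (t (j + k) j (hj₀.trans h)) with hM'
  set M₀ := LinearMap.range (t (j + k₀) j hj₀) with hM₀
  have hle : M' ≤ M₀ := by
    rw [hM', ← ht_comp (j + k) (j + k₀) j h hj₀]
    exact LinearMap.range_comp_le_range _ _
  have hrank : Module.finrank R M₀ ≤ Module.finrank R M' := hmin k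
  have key : ∀ x ∈ M₀, ∃ a : ℤ, a ≠ 0 ∧ (a : ℤ) • x ∈ M' := by
    intro x hx
    obtain ⟨r, hr0, hrx⟩ := exists_smul_mem_of_finrank_le hle hrank hx
    obtain ⟨⟨a, s⟩, hs⟩ := IsLocalization.surj (Submonoid.powers (p : ℤ)) r
    refine ⟨a, ?_, ?_⟩
    · rintro rfl
      rw [map_zero] at hs
      exact hr0 (((IsLocalization.map_units R s).mul_left_eq_zero).mp hs)
    · have h1 : algebraMap ℤ R a • x = algebraMap ℤ R (s : ℤ) • (r • x) := by
        rw [← hs, mul_comm, mul_smul]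
      have h2 : (a : ℤ) • x = algebraMap ℤ R a • x := by
        rw [eq_intCast (algebraMap ℤ R) a, Int.cast_smul_eq_zsmul]
      rw [h2, h1]
      exact Submodule.smul_mem _ _ hrx
  apply le_antisymm
  · have hcomp : (TensorProduct.map
          ((t (j + k) j (hj₀.trans h)).toAddMonoidHom.toIntLinearMap)
          (LinearMap.id : QmodZ →ₗ[ℤ] QmodZ)) =
        (TensorProduct.map ((t (j + k₀) j hj₀).toAddMonoidHom.toIntLinearMap)
            (LinearMap.id : QmodZ →ₗ[ℤ] QmodZ)).comp
          (TensorProduct.map ((t (j + k) (j + k₀) h).toAddMonoidHom.toIntLinearMap)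
            (LinearMap.id : QmodZ →ₗ[ℤ] QmodZ)) := by
      rw [← TensorProduct.map_comp]
      congr 1
      · apply LinearMap.ext
        intro x
        exact (DFunLike.congr_fun (ht_comp (j + k) (j + k₀) j h hj₀) x).symm
    rw [hcomp]
    exact LinearMap.range_comp_le_range _ _
  · rintro z ⟨w, rfl⟩
    induction w using TensorProduct.induction_on with
    | zero => simp only [map_zero]; exact zero_mem _
    | add u v hu hv => rw [map_add]; exact add_mem hu hv
    | tmul x q =>
      obtain ⟨a, ha0, hax⟩ := key (t (j + k₀) j hj₀ x) ⟨x, rfl⟩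
      obtain ⟨y, hy⟩ := hax
      obtain ⟨rq, rfl⟩ := QuotientAddGroup.mk_surjective q
      refine ⟨y ⊗ₜ (QuotientAddGroup.mk (rq / (a : ℚ)) : QmodZ), ?_⟩
      have haQ : (a : ℚ) ≠ 0 := Int.cast_ne_zero.mpr ha0
      show (t (j + k) j (hj₀.trans h) y) ⊗ₜ[ℤ] (QuotientAddGroup.mk (rq / (a : ℚ)) : QmodZ)
          = (t (j + k₀) j hj₀ x) ⊗ₜ[ℤ] (QuotientAddGroup.mk rq : QmodZ)
      rw [hy, TensorProduct.smul_tmul]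
      congr 1
      rw [← QuotientAddGroup.mk_zsmul]
      congr 1
      rw [zsmul_eq_mul]
      field_simp
end

section
/- Let A be a principal ideal domain with fraction field F, let C• be a cochain complex of finitely generated free A-modules, and fix an integer i. If H^i(C• ⊗_A F) = 0 and H^i(C• ⊗_A A/(a)) = 0 for every nonzero a ∈ A, then H^i(C•) = 0. -/
open scoped TensorProduct

/-- Vanishing of the `i`-th cohomology of a cochain complex `(C, d)`:
every `i`-cocycle is a coboundary. -/
def VanishH (A : Type) [CommRing A] (C : ℤ → Type) [∀ k, AddCommGroup (C k)]
    [∀ k, Module A (C k)] (d : ∀ k : ℤ, C k →ₗ[A] C (k + 1)) (i : ℤ) : Prop :=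
  ∀ x : C i, d i x = 0 → ∃ y : C (i - 1), (by omega : i - 1 + 1 = i) ▸ d (i - 1) y = x

/-!
Write `H` for the cohomology in degree `i`, a finitely generated module since `A` is noetherian.
Tensoring with the fraction field shows that every class of `H` is killed by a nonzero scalar,
hence a single nonzero `a` kills all of `H`. Exactness after `⊗ A/(a)` writes every cocycle as
`a • x' + (coboundary)`, where `x'` is again a cocycle because `C^{i+1}` is torsion-free, and
`a • x'` is a coboundary because `a` kills `H`.
-/

open TensorProduct LinearMap
open scoped nonZeroDivisors

instance TensorProduct.isLocalizedModule_mk_flip_one {A : Type*} [CommRing A] {S : Submonoid A}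
    {M : Type*} [AddCommGroup M] [Module A M] {K : Type*} [CommRing K] [Algebra A K]
    [IsLocalization S K] : IsLocalizedModule S ((TensorProduct.mk A M K).flip 1) := by
  convert IsLocalizedModule.of_linearEquiv S (TensorProduct.mk A K M 1) (TensorProduct.comm A K M)
  ext
  rfl

section Exactness

variable {A : Type*} [CommRing A] {M N P : Type*} [AddCommGroup M] [AddCommGroup N]
  [AddCommGroup P] [Module A M] [Module A N] [Module A P] {f : M →ₗ[A] N} {g : N →ₗ[A] P}

theorem LinearMap.exists_nonZeroDivisor_smul_mem_range_of_rTensor (K : Type*) [CommRing K]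
    [Algebra A K] [IsFractionRing A K] (h : ker (g.rTensor K) ≤ range (f.rTensor K))
    {x : N} (hx : x ∈ ker g) : ∃ s ∈ A⁰, s • x ∈ range f := by
  obtain ⟨y, hy⟩ := h (show x ⊗ₜ[A] (1 : K) ∈ ker (g.rTensor K) by simp [mem_ker.1 hx])
  obtain ⟨⟨m, s⟩, hs⟩ := IsLocalizedModule.surj A⁰ ((TensorProduct.mk A M K).flip 1) y
  have hfm : f m ⊗ₜ[A] (1 : K) = ((s : A) • x) ⊗ₜ[A] (1 : K) :=
    calc f m ⊗ₜ[A] (1 : K) = f.rTensor K ((s : A) • y) := by rw [← Submonoid.smul_def, hs]; rfl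
      _ = ((s : A) • x) ⊗ₜ[A] (1 : K) := by rw [map_smul, hy, smul_tmul']
  obtain ⟨t, ht⟩ := (IsLocalizedModule.eq_iff_exists A⁰ ((TensorProduct.mk A N K).flip 1)).1 hfm
  refine ⟨t * s, mul_mem t.2 s.2, (t : A) • m, ?_⟩
  rw [map_smul, ← Submonoid.smul_def, ht, Submonoid.smul_def, mul_smul]

theorem LinearMap.ker_le_smul_top_sup_range_of_rTensor (I : Ideal A)
    (h : ker (g.rTensor (A ⧸ I)) ≤ range (f.rTensor (A ⧸ I))) :
    ker g ≤ I • ⊤ ⊔ range f := by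
  intro x hx
  obtain ⟨y, hy⟩ := h (show x ⊗ₜ[A] (1 : A ⧸ I) ∈ ker (g.rTensor (A ⧸ I)) by simp_all)
  obtain ⟨m, hm⟩ := Submodule.Quotient.mk_surjective _ (tensorQuotEquivQuotSMul M I y)
  rw [← (tensorQuotEquivQuotSMul M I).symm_apply_eq, tensorQuotEquivQuotSMul_symm_mk] at hm
  have hxm : (Submodule.Quotient.mk x : N ⧸ (I • ⊤ : Submodule A N)) =
      Submodule.Quotient.mk (f m) := by
    apply (tensorQuotEquivQuotSMul N I).symm.injective
    rw [tensorQuotEquivQuotSMul_symm_mk, tensorQuotEquivQuotSMul_symm_mk, ← hy, ← hm, rTensor_tmul]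
  exact Submodule.mem_sup.2
    ⟨_, (Submodule.Quotient.eq _).1 hxm, f m, ⟨m, rfl⟩, sub_add_cancel _ _⟩

end Exactness

theorem Submodule.exists_mem_nonZeroDivisors_forall_smul_mem {A N : Type*} [CommRing A]
    [IsNoetherianRing A] [AddCommGroup N] [Module A N] [Module.Finite A N] {K Q : Submodule A N}
    (h : ∀ x ∈ K, ∃ s ∈ A⁰, s • x ∈ Q) : ∃ a ∈ A⁰, ∀ x ∈ K, a • x ∈ Q := by
  have htors : Module.IsTorsion A (K ⧸ Q.comap K.subtype) := by
    intro z
    obtain ⟨⟨x, hx⟩, rfl⟩ := Submodule.Quotient.mk_surjective _ z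
    obtain ⟨s, hs, hsx⟩ := h x hx
    exact ⟨⟨s, hs⟩, (Submodule.Quotient.mk_eq_zero _).2 hsx⟩
  obtain ⟨a, ha_ann, ha⟩ := Submodule.annihilator_top_inter_nonZeroDivisors htors
  refine ⟨a, ha, fun x hx => ?_⟩
  have := Submodule.mem_annihilator.1 ha_ann (Submodule.Quotient.mk ⟨x, hx⟩) trivial
  rw [← Submodule.Quotient.mk_smul, Submodule.Quotient.mk_eq_zero] at this
  exact this

theorem LinearMap.ker_le_range_of_rTensor {A : Type*} [CommRing A] [IsNoetherianRing A]
    {M N P : Type*} [AddCommGroup M] [AddCommGroup N] [AddCommGroup P] [Module A M] [Module A N]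
    [Module A P] [Module.Finite A N] [Module.IsTorsionFree A P] {f : M →ₗ[A] N} {g : N →ₗ[A] P}
    (K : Type*) [CommRing K] [Algebra A K] [IsFractionRing A K] (hgf : g ∘ₗ f = 0)
    (hK : ker (g.rTensor K) ≤ range (f.rTensor K))
    (hQ : ∀ a ∈ A⁰,
      ker (g.rTensor (A ⧸ Ideal.span {a})) ≤ range (f.rTensor (A ⧸ Ideal.span {a}))) :
    ker g ≤ range f := by
  obtain ⟨a, ha, hak⟩ := Submodule.exists_mem_nonZeroDivisors_forall_smul_mem
    fun x hx => exists_nonZeroDivisor_smul_mem_range_of_rTensor K hK hx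
  intro x hx
  obtain ⟨_, hn, _, ⟨m, rfl⟩, rfl⟩ :=
    Submodule.mem_sup.1 (ker_le_smul_top_sup_range_of_rTensor _ (hQ a ha) hx)
  rw [Submodule.ideal_span_singleton_smul, Submodule.mem_smul_pointwise_iff_exists] at hn
  obtain ⟨n, -, rfl⟩ := hn
  have hgn : g n = 0 := by
    have : a • g n = 0 := by simpa [← LinearMap.comp_apply, hgf] using hx
    exact ((isRegular_iff_mem_nonZeroDivisors.2 ha).smul_eq_zero_iff_right).1 this
  exact add_mem (hak n hgn) ⟨m, rfl⟩

section Cochain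

variable {A : Type} [CommRing A] {C : ℤ → Type} [∀ k, AddCommGroup (C k)] [∀ k, Module A (C k)]

theorem eqRec_eq_linearEquiv_cast {j i : ℤ} (h : j = i) (v : C j) :
    h ▸ v = LinearEquiv.cast (R := A) (M := C) h v := by
  subst h; rfl

theorem vanishH_iff_ker_le_range (d : ∀ k : ℤ, C k →ₗ[A] C (k + 1)) (i : ℤ) :
    VanishH A C d i ↔
      ker (d i) ≤
        range ((LinearEquiv.cast (M := C) (sub_add_cancel i 1)).toLinearMap ∘ₗ d (i - 1)) := by
  simp only [VanishH, eqRec_eq_linearEquiv_cast (A := A), SetLike.le_def, mem_ker, mem_range,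
    LinearMap.comp_apply, LinearEquiv.coe_coe]

theorem LinearEquiv.cast_rTensor (V : Type) [AddCommGroup V] [Module A V] {j i : ℤ} (h : j = i) :
    (LinearEquiv.cast (M := fun k => C k ⊗[A] V) h).toLinearMap =
      (LinearEquiv.cast (R := A) (M := C) h).toLinearMap.rTensor V := by
  subst h; ext; rfl

theorem vanishH_rTensor_iff (d : ∀ k : ℤ, C k →ₗ[A] C (k + 1)) (i : ℤ) (V : Type)
    [AddCommGroup V] [Module A V] :
    VanishH A (fun k => C k ⊗[A] V) (fun k => (d k).rTensor V) i ↔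
      ker ((d i).rTensor V) ≤
        range (((LinearEquiv.cast (M := C) (sub_add_cancel i 1)).toLinearMap ∘ₗ
          d (i - 1)).rTensor V) := by
  rw [vanishH_iff_ker_le_range, rTensor_comp, LinearEquiv.cast_rTensor]

theorem comp_linearEquiv_cast_comp_eq_zero (d : ∀ k : ℤ, C k →ₗ[A] C (k + 1))
    (hdd : ∀ k : ℤ, d (k + 1) ∘ₗ d k = 0) {j i : ℤ} (h : j + 1 = i) :
    d i ∘ₗ (LinearEquiv.cast (M := C) h).toLinearMap ∘ₗ d j = 0 := by
  subst h; exact hdd j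

end Cochain

/-- **Detecting vanishing of cohomology over a PID via residue fields and the fraction
field.**  Let `A` be a PID with fraction field `F` and `C•` a cochain complex of finitely
generated free `A`-modules.  If `H^i(C• ⊗ F) = 0` and `H^i(C• ⊗ A/(a)) = 0` for every
nonzero `a ∈ A`, then `H^i(C•) = 0`. -/
theorem vanishH_of_baseChanges (A : Type) [CommRing A] [IsDomain A] [IsPrincipalIdealRing A]
    (C : ℤ → Type) [∀ k, AddCommGroup (C k)] [∀ k, Module A (C k)]
    [∀ k, Module.Free A (C k)] [∀ k, Module.Finite A (C k)]
    (d : ∀ k : ℤ, C k →ₗ[A] C (k + 1))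
    (hdd : ∀ k : ℤ, (d (k + 1)).comp (d k) = 0)
    (i : ℤ)
    (hF : VanishH A (fun k => C k ⊗[A] FractionRing A)
      (fun k => TensorProduct.map (d k) (LinearMap.id : FractionRing A →ₗ[A] FractionRing A)) i)
    (hQ : ∀ a : A, a ≠ 0 → VanishH A (fun k => C k ⊗[A] (A ⧸ Ideal.span {a}))
      (fun k => TensorProduct.map (d k)
        (LinearMap.id : (A ⧸ Ideal.span {a}) →ₗ[A] (A ⧸ Ideal.span {a}))) i) :
    VanishH A C d i :=
  (vanishH_iff_ker_le_range d i).2 <|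
    ker_le_range_of_rTensor (FractionRing A) (comp_linearEquiv_cast_comp_eq_zero d hdd _)
      ((vanishH_rTensor_iff d i _).1 hF)
      fun a ha => (vanishH_rTensor_iff d i _).1 (hQ a (nonZeroDivisors.ne_zero ha))
end

section
/- Let A be a principal ideal domain, π ∈ A a prime element, and k ≥ 2 an integer. Let C• be a cochain complex of free A-modules. If the complexes C• ⊗_A A/(π^{k−1}) and C• ⊗_A A/(π) are acyclic (all their cohomology groups vanish), then the complex C• ⊗_A A/(π^k) is acyclic. -/
open scoped TensorProduct

section Aux
variable {A : Type} [CommRing A] {C : ℤ → Type} [∀ n, AddCommGroup (C n)] [∀ n, Module A (C n)]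

lemma tmul_one_eq_zero_iff {M : Type} [AddCommGroup M] [Module A M] (a : A) (x : M) :
    x ⊗ₜ[A] (1 : A ⧸ Ideal.span {a}) = 0 ↔ ∃ u, x = a • u := by
  rw [show (1 : A ⧸ Ideal.span {a}) = Ideal.Quotient.mk _ 1 from rfl]
  rw [← (TensorProduct.tensorQuotEquivQuotSMul M (Ideal.span {a})).map_eq_zero_iff]
  rw [TensorProduct.tensorQuotEquivQuotSMul_tmul_mk, one_smul,
    Submodule.Quotient.mk_eq_zero, Submodule.ideal_span_singleton_smul]
  constructor
  · rintro h
    rw [← SetLike.mem_coe, Submodule.coe_pointwise_smul, Set.mem_smul_set] at h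
    obtain ⟨u, -, hu⟩ := h
    exact ⟨u, hu.symm⟩
  · rintro ⟨u, rfl⟩
    exact Submodule.smul_mem_pointwise_smul u a ⊤ trivial

lemma tmul_one_surj {M : Type} [AddCommGroup M] [Module A M] (a : A)
    (z : M ⊗[A] (A ⧸ Ideal.span {a})) : ∃ x : M, x ⊗ₜ[A] (1 : A ⧸ Ideal.span {a}) = z := by
  obtain ⟨w, hw⟩ := (TensorProduct.tensorQuotEquivQuotSMul M (Ideal.span {a})).symm.surjective z
  obtain ⟨x, hx⟩ := Submodule.Quotient.mk_surjective _ w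
  exact ⟨x, by rw [← hw, ← hx, TensorProduct.tensorQuotEquivQuotSMul_symm_mk]⟩

lemma free_cancel {M : Type} [AddCommGroup M] [Module A M] [Module.Free A M] [IsDomain A]
    {b : A} (hb : b ≠ 0) {x y : M} (h : b • x = b • y) : x = y := by
  have B := Module.Free.chooseBasis A M
  apply B.repr.injective
  ext i
  have h' := DFunLike.congr_fun (congrArg B.repr h) i
  simp only [map_smul, Finsupp.smul_apply, smul_eq_mul] at h'
  exact mul_left_cancel₀ hb h'

lemma cast_tmul {Q : Type} [AddCommGroup Q] [Module A Q] {m n : ℤ} (h : m = n) (c : C m) (q : Q) :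
    h ▸ (c ⊗ₜ[A] q : C m ⊗[A] Q) = (h ▸ c : C n) ⊗ₜ[A] q := by subst h; rfl

lemma cast_d (d : ∀ n : ℤ, C n →ₗ[A] C (n + 1)) {m n : ℤ} (h : m = n) (w : C m) :
    d n (h ▸ w) = (show m + 1 = n + 1 by rw [h]) ▸ d m w := by subst h; rfl

lemma cast_zero {m n : ℤ} (h : m = n) : (h ▸ (0 : C m) : C n) = 0 := by subst h; rfl

lemma cast_add {m n : ℤ} (h : m = n) (a b : C m) :
    (h ▸ (a + b) : C n) = h ▸ a + h ▸ b := by subst h; rfl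

lemma cast_smul {m n : ℤ} (h : m = n) (r : A) (a : C m) :
    (h ▸ (r • a) : C n) = r • (h ▸ a : C n) := by subst h; rfl

end Aux

/-- **Devissage of acyclicity along powers of a prime element.**
Let `A` be a PID, `π ∈ A` a prime element and `k ≥ 2`.  If `C•` is a cochain complex of free
`A`-modules such that `C• ⊗ A/(π^{k−1})` and `C• ⊗ A/(π)` are acyclic, then `C• ⊗ A/(π^k)`
is acyclic. -/
theorem acyclic_mod_prime_power (A : Type) [CommRing A] [IsDomain A] [IsPrincipalIdealRing A]
    (π : A) (hπ : Prime π) (k : ℕ) (hk : 2 ≤ k)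
    (C : ℤ → Type) [∀ n, AddCommGroup (C n)] [∀ n, Module A (C n)]
    [∀ n, Module.Free A (C n)]
    (d : ∀ n : ℤ, C n →ₗ[A] C (n + 1))
    (hdd : ∀ n : ℤ, (d (n + 1)).comp (d n) = 0)
    (h1 : ∀ i : ℤ, VanishH A (fun n => C n ⊗[A] (A ⧸ Ideal.span {π ^ (k - 1)}))
      (fun n => TensorProduct.map (d n)
        (LinearMap.id : (A ⧸ Ideal.span {π ^ (k - 1)}) →ₗ[A] (A ⧸ Ideal.span {π ^ (k - 1)}))) i)
    (h2 : ∀ i : ℤ, VanishH A (fun n => C n ⊗[A] (A ⧸ Ideal.span {π}))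
      (fun n => TensorProduct.map (d n)
        (LinearMap.id : (A ⧸ Ideal.span {π}) →ₗ[A] (A ⧸ Ideal.span {π}))) i) :
    ∀ i : ℤ, VanishH A (fun n => C n ⊗[A] (A ⧸ Ideal.span {π ^ k}))
      (fun n => TensorProduct.map (d n)
        (LinearMap.id : (A ⧸ Ideal.span {π ^ k}) →ₗ[A] (A ⧸ Ideal.span {π ^ k}))) i := by
  intro i x hx
  have e : i - 1 + 1 = i := by omega
  have hπ0 : π ≠ 0 := hπ.ne_zero
  have hbK : π ^ (k - 1) ≠ 0 := pow_ne_zero _ hπ0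
  have hpow : π ^ (k - 1) * π = π ^ k := by
    rw [← pow_succ]; congr 1; omega
  obtain ⟨x₀, rfl⟩ := tmul_one_surj (π ^ k) x
  simp only [TensorProduct.map_tmul, LinearMap.id_apply] at hx
  obtain ⟨u, hu⟩ := (tmul_one_eq_zero_iff _ _).mp hx
  -- x₀ is a cocycle mod π^{k-1}
  have hc1 : TensorProduct.map (d i)
      (LinearMap.id : (A ⧸ Ideal.span {π ^ (k - 1)}) →ₗ[A] _)
      (x₀ ⊗ₜ[A] (1 : A ⧸ Ideal.span {π ^ (k - 1)})) = 0 := by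
    rw [TensorProduct.map_tmul, LinearMap.id_apply]
    exact (tmul_one_eq_zero_iff _ _).mpr ⟨π • u, by rw [hu, smul_smul, hpow]⟩
  obtain ⟨y₁, hy₁⟩ := h1 i (x₀ ⊗ₜ 1) hc1
  obtain ⟨y, rfl⟩ := tmul_one_surj (π ^ (k - 1)) y₁
  rw [TensorProduct.map_tmul, LinearMap.id_apply, cast_tmul (C := C)] at hy₁
  set Dy : C i := (by omega : i - 1 + 1 = i) ▸ d (i - 1) y with hDy
  have hz' : (x₀ - Dy) ⊗ₜ[A] (1 : A ⧸ Ideal.span {π ^ (k - 1)}) = 0 := by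
    rw [TensorProduct.sub_tmul, hy₁, sub_self]
  obtain ⟨z, hz⟩ := (tmul_one_eq_zero_iff _ _).mp hz'
  have hdDy : d i Dy = 0 := by
    rw [hDy, cast_d d, show d (i - 1 + 1) (d (i - 1) y) = 0 from
      DFunLike.congr_fun (hdd (i - 1)) y, cast_zero]
  have hdz : d i z = π • u := by
    refine free_cancel (A := A) hbK ?_
    have h3 := congrArg (d i) hz
    rw [map_sub, hdDy, sub_zero, map_smul, hu] at h3
    rw [← h3, smul_smul, hpow]
  -- z is a cocycle mod π
  have hc2 : TensorProduct.map (d i)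
      (LinearMap.id : (A ⧸ Ideal.span {π}) →ₗ[A] _)
      (z ⊗ₜ[A] (1 : A ⧸ Ideal.span {π})) = 0 := by
    rw [TensorProduct.map_tmul, LinearMap.id_apply]
    exact (tmul_one_eq_zero_iff _ _).mpr ⟨u, hdz⟩
  obtain ⟨w₁, hw₁⟩ := h2 i (z ⊗ₜ 1) hc2
  obtain ⟨w, rfl⟩ := tmul_one_surj π w₁
  rw [TensorProduct.map_tmul, LinearMap.id_apply, cast_tmul (C := C)] at hw₁
  set Dw : C i := (by omega : i - 1 + 1 = i) ▸ d (i - 1) w with hDw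
  have hs' : (z - Dw) ⊗ₜ[A] (1 : A ⧸ Ideal.span {π}) = 0 := by
    rw [TensorProduct.sub_tmul, hw₁, sub_self]
  obtain ⟨s, hs⟩ := (tmul_one_eq_zero_iff _ _).mp hs'
  refine ⟨(y + π ^ (k - 1) • w) ⊗ₜ 1, ?_⟩
  rw [TensorProduct.map_tmul, LinearMap.id_apply, cast_tmul (C := C),
    map_add, map_smul, cast_add, cast_smul, ← hDy, ← hDw]
  have key : (x₀ - (Dy + π ^ (k - 1) • Dw)) ⊗ₜ[A] (1 : A ⧸ Ideal.span {π ^ k}) = 0 := by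
    refine (tmul_one_eq_zero_iff _ _).mpr ⟨s, ?_⟩
    have : x₀ - (Dy + π ^ (k - 1) • Dw) = (x₀ - Dy) - π ^ (k - 1) • Dw := by abel
    rw [this, hz, ← smul_sub, hs, smul_smul, hpow]
  rw [TensorProduct.sub_tmul, sub_eq_zero] at key
  exact key.symm
end
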